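/- arXiv:2102.07189 — 16 statements merged into one kernel-verified Lean document; each statement's English description precedes it below -/
import Mathlib

section
/- Every 1-absorbing δ-primary ideal of R is a 2-absorbing δ-primary ideal of R; that is, if I is a 1-absorbing δ-primary ideal of R and a, b, c ∈ R satisfy abc ∈ I, then ab ∈ I or ac ∈ δ(I) or bc ∈ δ(I). -/
open Ideal

/-- `δ` is an expansion function of the ideals of `R`. -/
def ExpansionFunction (R : Type*) [CommRing R] (δ : Ideal R → Ideal R) : Prop :=
  (∀ I : Ideal R, I ≤ δ I) ∧ ∀ I J : Ideal R, J ≤ I → δ J ≤ δ I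

/-- A proper ideal `I` of `R` is 1-absorbing δ-primary if whenever nonunit elements
`a, b, c` satisfy `a * b * c ∈ I`, then `a * b ∈ I` or `c ∈ δ I`. -/
def IsOneAbsDeltaPrimary {R : Type*} [CommRing R] (δ : Ideal R → Ideal R) (I : Ideal R) : Prop :=
  I ≠ ⊤ ∧ ∀ a b c : R, ¬ IsUnit a → ¬ IsUnit b → ¬ IsUnit c →
    a * b * c ∈ I → a * b ∈ I ∨ c ∈ δ I

/-- A proper ideal `I` of `R` is δ-primary if whenever `a * b ∈ I`,
then `a ∈ I` or `b ∈ δ I`. -/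
def IsDeltaPrimary {R : Type*} [CommRing R] (δ : Ideal R → Ideal R) (I : Ideal R) : Prop :=
  I ≠ ⊤ ∧ ∀ a b : R, a * b ∈ I → a ∈ I ∨ b ∈ δ I

/-- A proper ideal `I` of `R` is δ-semiprimary if whenever `a * b ∈ I`,
then `a ∈ δ I` or `b ∈ δ I`. -/
def IsDeltaSemiprimary {R : Type*} [CommRing R] (δ : Ideal R → Ideal R) (I : Ideal R) : Prop :=
  I ≠ ⊤ ∧ ∀ a b : R, a * b ∈ I → a ∈ δ I ∨ b ∈ δ I

/-- A proper ideal `I` of `R` is 1-absorbing prime if whenever nonunit elements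
`a, b, c` satisfy `a * b * c ∈ I`, then `a * b ∈ I` or `c ∈ I`. -/
def IsOneAbsPrime {R : Type*} [CommRing R] (I : Ideal R) : Prop :=
  I ≠ ⊤ ∧ ∀ a b c : R, ¬ IsUnit a → ¬ IsUnit b → ¬ IsUnit c →
    a * b * c ∈ I → a * b ∈ I ∨ c ∈ I

theorem Ideal.mul_mem_or_of_mul_mul_mem_of_isUnit {R : Type*} [CommSemiring R] {I : Ideal R}
    {a b c : R} (habc : a * b * c ∈ I) (hunit : IsUnit a ∨ IsUnit b ∨ IsUnit c) :
    a * b ∈ I ∨ a * c ∈ I ∨ b * c ∈ I := by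
  rcases hunit with ha | hb | hc
  · rw [mul_assoc] at habc
    exact Or.inr (Or.inr ((I.unit_mul_mem_iff_mem ha).1 habc))
  · rw [mul_right_comm, mul_comm] at habc
    exact Or.inr (Or.inl ((I.unit_mul_mem_iff_mem hb).1 habc))
  · exact Or.inl ((I.mul_unit_mem_iff_mem hc).1 habc)

theorem one_abs_delta_primary_is_two_abs_delta_primary_general
    {R : Type*} [CommRing R]
    (δ : Ideal R → Ideal R) (hδ : ExpansionFunction R δ)
    (I : Ideal R) (hI : IsOneAbsDeltaPrimary δ I) :
    I ≠ ⊤ ∧ ∀ a b c : R, a * b * c ∈ I →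
      a * b ∈ I ∨ a * c ∈ δ I ∨ b * c ∈ δ I := by
  refine ⟨hI.1, fun a b c habc => ?_⟩
  by_cases hunit : IsUnit a ∨ IsUnit b ∨ IsUnit c
  · exact (Ideal.mul_mem_or_of_mul_mul_mem_of_isUnit habc hunit).imp_right
      (Or.imp (hδ.1 I ·) (hδ.1 I ·))
  obtain ⟨ha, hb, hc⟩ := by simpa only [not_or] using hunit
  exact (hI.2 a b c ha hb hc habc).imp_right fun hc' => Or.inl ((δ I).mul_mem_left a hc')

theorem one_abs_delta_primary_is_two_abs_delta_primary
    {R : Type*} [CommRing R] [Nontrivial R]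
    (δ : Ideal R → Ideal R) (hδ : ExpansionFunction R δ)
    (I : Ideal R) (hI : IsOneAbsDeltaPrimary δ I) :
    I ≠ ⊤ ∧ ∀ a b c : R, a * b * c ∈ I →
      a * b ∈ I ∨ a * c ∈ δ I ∨ b * c ∈ δ I :=
  one_abs_delta_primary_is_two_abs_delta_primary_general δ hδ I hI
end

section
/- If I is a 1-absorbing δ-primary ideal of R and δ(I) is a radical ideal (i.e., √(δ(I)) = δ(I)), then I is a δ-semiprimary ideal of R. -/
open Ideal

namespace IsOneAbsDeltaPrimary

variable {R : Type*} [CommRing R] {δ : Ideal R → Ideal R} {I : Ideal R}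

theorem sq_mem_or_mem (hI : IsOneAbsDeltaPrimary δ I) {a b : R} (ha : ¬IsUnit a)
    (hb : ¬IsUnit b) (hab : a * b ∈ I) : a ^ 2 ∈ I ∨ b ∈ δ I := by
  have haab : a * a * b ∈ I := by
    rw [mul_assoc]
    exact I.mul_mem_left a hab
  simpa only [sq] using hI.2 a a b ha ha hb haab

theorem isDeltaSemiprimary (hI : IsOneAbsDeltaPrimary δ I) (hle : I ≤ δ I)
    (hrad : (δ I).IsRadical) : IsDeltaSemiprimary δ I := by
  refine ⟨hI.1, fun a b hab => ?_⟩
  by_cases ha : IsUnit a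
  · exact .inr (hle ((I.unit_mul_mem_iff_mem ha).mp hab))
  by_cases hb : IsUnit b
  · exact .inl (hle ((I.mul_unit_mem_iff_mem hb).mp hab))
  exact (hI.sq_mem_or_mem ha hb hab).imp (fun ha2 => hrad ⟨2, hle ha2⟩) id

end IsOneAbsDeltaPrimary

theorem one_abs_delta_primary_radical_delta_is_semiprimary_general
    {R : Type*} [CommRing R]
    (δ : Ideal R → Ideal R) (hδ : ExpansionFunction R δ)
    (I : Ideal R) (hI : IsOneAbsDeltaPrimary δ I)
    (hrad : (δ I).radical = δ I) :
    IsDeltaSemiprimary δ I :=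
  hI.isDeltaSemiprimary (hδ.1 I) (Ideal.radical_eq_iff.mp hrad)

theorem one_abs_delta_primary_radical_delta_is_semiprimary
    {R : Type*} [CommRing R] [Nontrivial R]
    (δ : Ideal R → Ideal R) (hδ : ExpansionFunction R δ)
    (I : Ideal R) (hI : IsOneAbsDeltaPrimary δ I)
    (hrad : (δ I).radical = δ I) :
    IsDeltaSemiprimary δ I :=
  one_abs_delta_primary_radical_delta_is_semiprimary_general δ hδ I hI hrad
end

section
/- If a commutative ring R admits a 1-absorbing δ-primary ideal that is not a δ-primary ideal, then R is a local ring. -/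
open Ideal

/- If `a * b ∈ I` with `a ∉ I` and `b ∉ δ I` witnesses that `I` is not δ-primary, applying
1-absorption to `x * a * b` for nonunits `x` shows that every nonunit multiplies `a` into `I`.
So all nonunits lie in the proper ideal `I.colon {a}`, hence form an ideal, and `R` is local. -/

theorem IsLocalRing.of_forall_not_isUnit_mem {R : Type*} [CommRing R] {J : Ideal R}
    (hJ : J ≠ ⊤) (h : ∀ x : R, ¬IsUnit x → x ∈ J) : IsLocalRing R :=
  haveI : Nontrivial R :=
    nontrivial_of_ne 1 0 fun h10 => hJ (J.eq_top_iff_one.2 (h10 ▸ J.zero_mem))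
  IsLocalRing.of_nonunits_add fun x y hx hy hxy =>
    hJ (J.eq_top_of_isUnit_mem (J.add_mem (h x hx) (h y hy)) hxy)

theorem IsLocalRing.of_forall_not_isUnit_mul_mem {R : Type*} [CommRing R] {I : Ideal R} {a : R}
    (ha : a ∉ I) (h : ∀ x : R, ¬IsUnit x → x * a ∈ I) : IsLocalRing R := by
  refine IsLocalRing.of_forall_not_isUnit_mem (J := I.colon {a}) ?_ fun x hx => ?_
  · rw [Ideal.ne_top_iff_one, Submodule.mem_colon_singleton, one_smul]
    exact ha
  · exact Submodule.mem_colon_singleton.2 (h x hx)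

namespace Ideal

variable {R : Type*} [CommRing R] {I : Ideal R} {a b : R}

theorem not_isUnit_of_mul_mem_of_right_notMem (hab : a * b ∈ I) (hb : b ∉ I) : ¬IsUnit a :=
  fun hu => hb ((I.unit_mul_mem_iff_mem hu).1 hab)

theorem not_isUnit_of_mul_mem_of_left_notMem (hab : a * b ∈ I) (ha : a ∉ I) : ¬IsUnit b :=
  fun hu => ha ((I.mul_unit_mem_iff_mem hu).1 hab)

end Ideal

theorem IsOneAbsDeltaPrimary.mul_mem_of_not_isUnit {R : Type*} [CommRing R] {δ : Ideal R → Ideal R}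
    {I : Ideal R} (hI : IsOneAbsDeltaPrimary δ I) (hIδ : I ≤ δ I) {a b : R} (hab : a * b ∈ I)
    (ha : a ∉ I) (hb : b ∉ δ I) {x : R} (hx : ¬IsUnit x) : x * a ∈ I := by
  have hxab : x * a * b ∈ I := by
    rw [mul_assoc]
    exact I.mul_mem_left x hab
  have hau := Ideal.not_isUnit_of_mul_mem_of_right_notMem hab fun hbI => hb (hIδ hbI)
  have hbu := Ideal.not_isUnit_of_mul_mem_of_left_notMem hab ha
  exact (hI.2 x a b hx hau hbu hxab).resolve_right hb

theorem local_of_exists_one_abs_delta_primary_not_delta_primary_general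
    {R : Type*} [CommRing R]
    (δ : Ideal R → Ideal R) (hδ : ExpansionFunction R δ)
    (h : ∃ I : Ideal R, IsOneAbsDeltaPrimary δ I ∧ ¬ IsDeltaPrimary δ I) :
    IsLocalRing R := by
  obtain ⟨I, hI, hnot⟩ := h
  obtain ⟨a, b, hab, ha, hb⟩ : ∃ a b : R, a * b ∈ I ∧ a ∉ I ∧ b ∉ δ I := by
    simpa [IsDeltaPrimary, hI.1] using hnot
  exact IsLocalRing.of_forall_not_isUnit_mul_mem ha fun x hx =>
    hI.mul_mem_of_not_isUnit (hδ.1 I) hab ha hb hx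

theorem local_of_exists_one_abs_delta_primary_not_delta_primary
    {R : Type*} [CommRing R] [Nontrivial R]
    (δ : Ideal R → Ideal R) (hδ : ExpansionFunction R δ)
    (h : ∃ I : Ideal R, IsOneAbsDeltaPrimary δ I ∧ ¬ IsDeltaPrimary δ I) :
    IsLocalRing R :=
  local_of_exists_one_abs_delta_primary_not_delta_primary_general δ hδ h
end

section
/- Let R be a local ring with maximal ideal M and let x be a nonzero prime element of R such that δ(xM) is strictly contained in M. If x ∈ δ(xM), then the ideal xM is a 1-absorbing δ-primary ideal of R that is not a δ-primary ideal of R. -/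
open Ideal

namespace IsLocalRing

variable {R : Type*} [CommRing R] [IsLocalRing R]

theorem span_singleton_mul_maximalIdeal_ne_top (x : R) :
    span {x} * maximalIdeal R ≠ ⊤ :=
  ne_top_of_le_ne_top (maximalIdeal.isMaximal R).ne_top Ideal.mul_le_right

theorem notMem_span_singleton_mul_maximalIdeal {x : R} (hx : x ≠ 0) :
    x ∉ span {x} * maximalIdeal R := by
  rw [mem_span_singleton_mul]
  rintro ⟨m, hm, hxm⟩
  have hunit : IsUnit (1 - m) := isUnit_one_sub_self_of_mem_nonunits m hm
  exact hx (hunit.mul_left_eq_zero.mp (by rw [mul_sub, mul_one, hxm, sub_self]))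

theorem isOneAbsDeltaPrimary_span_singleton_mul_maximalIdeal (δ : Ideal R → Ideal R)
    {x : R} (hx : Prime x) (hmem : x ∈ δ (span {x} * maximalIdeal R)) :
    IsOneAbsDeltaPrimary δ (span {x} * maximalIdeal R) := by
  refine ⟨span_singleton_mul_maximalIdeal_ne_top x, fun a b c ha hb _ habc => ?_⟩
  have hdvd : x ∣ a * b * c := mem_span_singleton.mp (Ideal.mul_le_left habc)
  rcases hx.dvd_mul.mp hdvd with hab | ⟨t, rfl⟩
  · left
    rcases hx.dvd_mul.mp hab with hxa | hxb
    · exact mul_mem_mul (mem_span_singleton.mpr hxa) hb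
    · exact mul_comm b a ▸ mul_mem_mul (mem_span_singleton.mpr hxb) ha
  · exact Or.inr (mul_mem_right t _ hmem)

theorem not_isDeltaPrimary_span_singleton_mul_maximalIdeal (δ : Ideal R → Ideal R)
    {x : R} (hx : x ≠ 0) (hlt : δ (span {x} * maximalIdeal R) < maximalIdeal R) :
    ¬ IsDeltaPrimary δ (span {x} * maximalIdeal R) := by
  rintro ⟨-, hprimary⟩
  obtain ⟨y, hyM, hyδ⟩ := SetLike.exists_of_lt hlt
  have hxy : x * y ∈ span {x} * maximalIdeal R := mul_mem_mul (mem_span_singleton_self x) hyM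
  exact (hprimary x y hxy).elim (notMem_span_singleton_mul_maximalIdeal hx) hyδ

end IsLocalRing

theorem prime_mul_maximal_one_abs_delta_primary_not_delta_primary_general
    {R : Type*} [CommRing R] [IsLocalRing R]
    (δ : Ideal R → Ideal R)
    (x : R) (hx : Prime x)
    (hlt : δ (span {x} * IsLocalRing.maximalIdeal R) < IsLocalRing.maximalIdeal R)
    (hmem : x ∈ δ (span {x} * IsLocalRing.maximalIdeal R)) :
    IsOneAbsDeltaPrimary δ (span {x} * IsLocalRing.maximalIdeal R) ∧
      ¬ IsDeltaPrimary δ (span {x} * IsLocalRing.maximalIdeal R) :=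
  ⟨IsLocalRing.isOneAbsDeltaPrimary_span_singleton_mul_maximalIdeal δ hx hmem,
    IsLocalRing.not_isDeltaPrimary_span_singleton_mul_maximalIdeal δ hx.ne_zero hlt⟩

theorem prime_mul_maximal_one_abs_delta_primary_not_delta_primary
    {R : Type*} [CommRing R] [IsLocalRing R]
    (δ : Ideal R → Ideal R) (hδ : ExpansionFunction R δ)
    (x : R) (hx : Prime x)
    (hlt : δ (span {x} * IsLocalRing.maximalIdeal R) < IsLocalRing.maximalIdeal R)
    (hmem : x ∈ δ (span {x} * IsLocalRing.maximalIdeal R)) :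
    IsOneAbsDeltaPrimary δ (span {x} * IsLocalRing.maximalIdeal R) ∧
      ¬ IsDeltaPrimary δ (span {x} * IsLocalRing.maximalIdeal R) :=
  prime_mul_maximal_one_abs_delta_primary_not_delta_primary_general δ x hx hlt hmem
end

section
/- Let I be a 1-absorbing δ-primary ideal of R and let d ∈ R \ I be a nonunit element of R. Then the ideal quotient (I : d) = {x ∈ R : dx ∈ I} is a δ-primary ideal of R. -/
open Ideal

/- If `a * b * d ∈ I` with `a, b, d` nonunits, the 1-absorbing δ-primary condition applied to
`d * a * b` gives `d * a ∈ I` or `b ∈ δ I ⊆ δ (I : d)`. Units are harmless: a unit factor can be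
cancelled, and then the other factor already lies in `(I : d) ⊆ δ (I : d)`. -/

theorem isDeltaPrimary_of_forall_nonunits {R : Type*} [CommRing R] {δ : Ideal R → Ideal R}
    {J : Ideal R} (hJδ : J ≤ δ J) (hJ : J ≠ ⊤)
    (h : ∀ a b : R, ¬ IsUnit a → ¬ IsUnit b → a * b ∈ J → a ∈ J ∨ b ∈ δ J) :
    IsDeltaPrimary δ J := by
  refine ⟨hJ, fun a b hab => ?_⟩
  by_cases ha : IsUnit a
  · exact .inr (hJδ ((J.unit_mul_mem_iff_mem ha).mp hab))
  by_cases hb : IsUnit b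
  · exact .inl ((J.mul_unit_mem_iff_mem hb).mp hab)
  exact h a b ha hb hab

theorem colon_span_singleton_ne_top {R : Type*} [CommRing R] {I : Ideal R} {d : R}
    (hd : d ∉ I) : I.colon (span {d}) ≠ ⊤ := by
  rwa [Ne, Ideal.colon_span, Submodule.colon_eq_top_iff_subset, Set.singleton_subset_iff]

theorem IsOneAbsDeltaPrimary.mul_mem_colon {R : Type*} [CommRing R] {δ : Ideal R → Ideal R}
    (hδ : ExpansionFunction R δ) {I : Ideal R} (hI : IsOneAbsDeltaPrimary δ I) {d a b : R}
    (hdu : ¬ IsUnit d) (ha : ¬ IsUnit a) (hb : ¬ IsUnit b) (hab : a * b ∈ I.colon (span {d})) :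
    a ∈ I.colon (span {d}) ∨ b ∈ δ (I.colon (span {d})) := by
  rw [mem_colon_span_singleton] at hab ⊢
  have hdab : d * a * b ∈ I := by convert hab using 1; ring
  rcases hI.2 d a b hdu ha hb hdab with hda | hbδ
  · exact .inl (mul_comm a d ▸ hda)
  · exact .inr (hδ.2 _ _ le_colon hbδ)

theorem colon_of_one_abs_delta_primary_is_delta_primary_general
    {R : Type*} [CommRing R]
    (δ : Ideal R → Ideal R) (hδ : ExpansionFunction R δ)
    (I : Ideal R) (hI : IsOneAbsDeltaPrimary δ I)
    (d : R) (hd : d ∉ I) (hdu : ¬ IsUnit d) :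
    IsDeltaPrimary δ (I.colon (span {d})) :=
  isDeltaPrimary_of_forall_nonunits (hδ.1 _) (colon_span_singleton_ne_top hd)
    fun _ _ ha hb hab => hI.mul_mem_colon hδ hdu ha hb hab

theorem colon_of_one_abs_delta_primary_is_delta_primary
    {R : Type*} [CommRing R] [Nontrivial R]
    (δ : Ideal R → Ideal R) (hδ : ExpansionFunction R δ)
    (I : Ideal R) (hI : IsOneAbsDeltaPrimary δ I)
    (d : R) (hd : d ∉ I) (hdu : ¬ IsUnit d) :
    IsDeltaPrimary δ (I.colon (span {d})) :=
  colon_of_one_abs_delta_primary_is_delta_primary_general δ hδ I hI d hd hdu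
end

section
/- If I is a 1-absorbing δ-primary ideal of R, then either I is a δ-semiprimary ideal of R, or R is a local ring whose maximal ideal M satisfies M² ⊆ I. -/
open Ideal

/-!
If `a * b ∈ I` with `a, b ∉ δ I`, then `a` and `b` are nonunits, and 1-absorption applied to
`a * c * b` gives `a * c ∈ I` for every nonunit `c`; applied once more to `x * y * a` it gives
`x * y ∈ I` for all nonunits `x, y`. As `a ∉ I`, `a * (x + y) ∈ I` forbids `x + y` to be a unit,
so the nonunits form the unique maximal ideal `M`, and `M ^ 2 ≤ I`.
-/

namespace Ideal

variable {R : Type*} [CommRing R]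

theorem isLocalRing_of_notMem_of_forall_mul_mem {I : Ideal R} {a : R} (ha : a ∉ I)
    (h : ∀ c, ¬IsUnit c → a * c ∈ I) : IsLocalRing R :=
  have : Nontrivial R := nontrivial_of_ne a 0 fun h0 => ha (h0 ▸ I.zero_mem)
  IsLocalRing.of_nonunits_add fun x y hx hy hxy =>
    ha ((I.mul_unit_mem_iff_mem hxy).1 (mul_add a x y ▸ I.add_mem (h x hx) (h y hy)))

end Ideal

namespace IsOneAbsDeltaPrimary

variable {R : Type*} [CommRing R] {δ : Ideal R → Ideal R} {I : Ideal R} {a b : R}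

theorem mul_mem_of_mul_mem_of_notMem (hI : IsOneAbsDeltaPrimary δ I) (ha : ¬IsUnit a)
    (hb : ¬IsUnit b) (hab : a * b ∈ I) (hbδ : b ∉ δ I) {c : R} (hc : ¬IsUnit c) : a * c ∈ I :=
  (hI.2 a c b ha hc hb (mul_right_comm a b c ▸ I.mul_mem_right c hab)).resolve_right hbδ

theorem mul_mem_of_not_isUnit_s5 (hI : IsOneAbsDeltaPrimary δ I) (ha : ¬IsUnit a) (haδ : a ∉ δ I)
    (h : ∀ c, ¬IsUnit c → a * c ∈ I) {x y : R} (hx : ¬IsUnit x) (hy : ¬IsUnit y) :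
    x * y ∈ I :=
  (hI.2 x y a hx hy ha <| by
    rw [mul_comm, ← mul_assoc]; exact I.mul_mem_right y (h x hx)).resolve_right haδ

end IsOneAbsDeltaPrimary

theorem one_abs_delta_primary_semiprimary_or_local_sq_le_general
    {R : Type*} [CommRing R]
    (δ : Ideal R → Ideal R) (hδ : ExpansionFunction R δ)
    (I : Ideal R) (hI : IsOneAbsDeltaPrimary δ I) :
    IsDeltaSemiprimary δ I ∨
      ∃ M : Ideal R, M.IsMaximal ∧ (∀ M' : Ideal R, M'.IsMaximal → M' = M) ∧
        M ^ 2 ≤ I := by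
  by_cases hs : IsDeltaSemiprimary δ I
  · exact Or.inl hs
  obtain ⟨a, b, hab, haδ, hbδ⟩ : ∃ a b, a * b ∈ I ∧ a ∉ δ I ∧ b ∉ δ I := by
    simpa [IsDeltaSemiprimary, hI.1] using hs
  have ha : ¬IsUnit a := fun hu => hbδ (hδ.1 I ((I.unit_mul_mem_iff_mem hu).1 hab))
  have hb : ¬IsUnit b := fun hu => haδ (hδ.1 I ((I.mul_unit_mem_iff_mem hu).1 hab))
  have hac : ∀ c, ¬IsUnit c → a * c ∈ I := fun c =>
    hI.mul_mem_of_mul_mem_of_notMem ha hb hab hbδ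
  have : IsLocalRing R := isLocalRing_of_notMem_of_forall_mul_mem (fun h => haδ (hδ.1 I h)) hac
  refine Or.inr ⟨IsLocalRing.maximalIdeal R, inferInstance,
    fun _ hM => IsLocalRing.eq_maximalIdeal hM, ?_⟩
  rw [pow_two, Ideal.mul_le]
  exact fun x hx y hy => hI.mul_mem_of_not_isUnit_s5 ha haδ hac hx hy

theorem one_abs_delta_primary_semiprimary_or_local_sq_le
    {R : Type*} [CommRing R] [Nontrivial R]
    (δ : Ideal R → Ideal R) (hδ : ExpansionFunction R δ)
    (I : Ideal R) (hI : IsOneAbsDeltaPrimary δ I) :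
    IsDeltaSemiprimary δ I ∨
      ∃ M : Ideal R, M.IsMaximal ∧ (∀ M' : Ideal R, M'.IsMaximal → M' = M) ∧
        M ^ 2 ≤ I :=
  one_abs_delta_primary_semiprimary_or_local_sq_le_general δ hδ I hI
end

section
/- Let R be a chained ring with maximal ideal M and let I be a proper ideal of R with I ≠ M². Then I is a 1-absorbing δ-primary ideal of R if and only if I is a δ-primary ideal of R. -/
open Ideal

/-!
Suppose `I` is 1-absorbing δ-primary but `a * b ∈ I` with `a ∉ I` and `b ∉ δ I`. Applying the
1-absorbing condition to `a * y * b` shows `a * M ⊆ I`. Comparing `(x)` with `(a)` and applying it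
to `r * x * b = a * b` when `a = r * x` with `r` a nonunit shows `M = (a)`. Hence `M ^ 2 = a * M ⊆ I`,
and conversely every `t = a * s ∈ I` has `s ∈ M` (otherwise `a ∈ I`), so `I = M ^ 2`.
-/

theorem Ideal.IsMaximal.mem_iff_not_isUnit_of_chain {R : Type*} [CommRing R]
    (hchain : ∀ I J : Ideal R, I ≤ J ∨ J ≤ I) {M : Ideal R} (hM : M.IsMaximal) {x : R} :
    x ∈ M ↔ ¬IsUnit x := by
  refine ⟨fun hx hu => hM.ne_top (M.eq_top_of_isUnit_mem hx hu), fun hx => ?_⟩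
  have hx' : span {x} ≠ ⊤ := by rwa [Ne, span_singleton_eq_top]
  rcases hchain (span {x}) M with h | h
  · exact h (mem_span_singleton_self x)
  · exact hM.eq_of_le hx' h ▸ mem_span_singleton_self x

theorem IsDeltaPrimary.isOneAbsDeltaPrimary {R : Type*} [CommRing R] {δ : Ideal R → Ideal R}
    {I : Ideal R} (h : IsDeltaPrimary δ I) : IsOneAbsDeltaPrimary δ I :=
  ⟨h.1, fun a b c _ _ _ habc => h.2 (a * b) c habc⟩

namespace IsOneAbsDeltaPrimary

variable {R : Type*} [CommRing R] {δ : Ideal R → Ideal R} {I : Ideal R} {a b : R}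

theorem mul_mem_of_mul_mem_of_not_mem (h : IsOneAbsDeltaPrimary δ I) (ha : ¬IsUnit a)
    (hb : ¬IsUnit b) (hab : a * b ∈ I) (hbδ : b ∉ δ I) {y : R} (hy : ¬IsUnit y) : a * y ∈ I :=
  (h.2 a y b ha hy hb (by simpa only [mul_right_comm] using I.mul_mem_right y hab)).resolve_right
    hbδ

theorem mem_span_singleton_of_mul_mem_of_not_mem (hchain : ∀ I J : Ideal R, I ≤ J ∨ J ≤ I)
    (h : IsOneAbsDeltaPrimary δ I) (hb : ¬IsUnit b) (hab : a * b ∈ I) (haI : a ∉ I)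
    (hbδ : b ∉ δ I) {x : R} (hx : ¬IsUnit x) : x ∈ span {a} := by
  rcases hchain (span {x}) (span {a}) with hle | hle
  · exact hle (mem_span_singleton_self x)
  obtain ⟨r, rfl⟩ := mem_span_singleton'.mp (hle (mem_span_singleton_self a))
  by_cases hr : IsUnit r
  · exact (unit_mul_mem_iff_mem _ hr).mp (mem_span_singleton_self _)
  · rcases h.2 r x b hr hx hb hab with h' | h'
    exacts [absurd h' haI, absurd h' hbδ]

theorem eq_sq_of_not_isDeltaPrimary (hchain : ∀ I J : Ideal R, I ≤ J ∨ J ≤ I) {M : Ideal R}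
    (hM : M.IsMaximal) (hδ : ∀ J : Ideal R, J ≤ δ J) (h : IsOneAbsDeltaPrimary δ I)
    (hnot : ¬IsDeltaPrimary δ I) : I = M ^ 2 := by
  have hmem : ∀ {x : R}, x ∈ M ↔ ¬IsUnit x := hM.mem_iff_not_isUnit_of_chain hchain
  obtain ⟨a, b, hab, haI, hbδ⟩ : ∃ a b, a * b ∈ I ∧ a ∉ I ∧ b ∉ δ I := by
    simpa [IsDeltaPrimary, h.1] using hnot
  have ha : ¬IsUnit a := fun hu => hbδ (hδ I ((unit_mul_mem_iff_mem I hu).mp hab))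
  have hb : ¬IsUnit b := fun hu => haI ((mul_unit_mem_iff_mem I hu).mp hab)
  have hMa : M = span {a} :=
    le_antisymm (fun x hx => h.mem_span_singleton_of_mul_mem_of_not_mem hchain hb hab haI hbδ
      (hmem.mp hx)) ((span_singleton_le_iff_mem M).mpr (hmem.mpr ha))
  have hsq : M ^ 2 = span {a} * M := by
    rw [sq]
    nth_rw 1 [hMa]
  rw [hsq]
  refine le_antisymm (fun t ht => ?_) (span_singleton_mul_le_iff.mpr fun y hy =>
    h.mul_mem_of_mul_mem_of_not_mem ha hb hab hbδ (hmem.mp hy))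
  have htM : t ∈ M := hmem.mpr fun hu => h.1 (I.eq_top_of_isUnit_mem ht hu)
  obtain ⟨s, rfl⟩ := mem_span_singleton.mp (hMa ▸ htM)
  exact mem_span_singleton_mul.mpr
    ⟨s, hmem.mpr fun hs => haI ((mul_unit_mem_iff_mem I hs).mp ht), rfl⟩

end IsOneAbsDeltaPrimary

theorem chained_one_abs_delta_primary_iff_delta_primary_general
    {R : Type*} [CommRing R]
    (hchain : ∀ I J : Ideal R, I ≤ J ∨ J ≤ I)
    (M : Ideal R) (hM : M.IsMaximal)
    (δ : Ideal R → Ideal R) (hδ : ExpansionFunction R δ)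
    (I : Ideal R) (hne : I ≠ M ^ 2) :
    IsOneAbsDeltaPrimary δ I ↔ IsDeltaPrimary δ I :=
  ⟨fun h => by_contra fun hnot => hne (h.eq_sq_of_not_isDeltaPrimary hchain hM hδ.1 hnot),
    IsDeltaPrimary.isOneAbsDeltaPrimary⟩

theorem chained_one_abs_delta_primary_iff_delta_primary
    {R : Type*} [CommRing R] [Nontrivial R]
    (hchain : ∀ I J : Ideal R, I ≤ J ∨ J ≤ I)
    (M : Ideal R) (hM : M.IsMaximal)
    (δ : Ideal R → Ideal R) (hδ : ExpansionFunction R δ)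
    (I : Ideal R) (hIproper : I ≠ ⊤) (hne : I ≠ M ^ 2) :
    IsOneAbsDeltaPrimary δ I ↔ IsDeltaPrimary δ I :=
  chained_one_abs_delta_primary_iff_delta_primary_general hchain M hM δ hδ I hne
end

section
/- Let {J_i : i ∈ D} be a nonempty family of 1-absorbing δ-primary ideals of R that is directed with respect to inclusion (for all i, j ∈ D there is k ∈ D with J_i ⊆ J_k and J_j ⊆ J_k). Then the union J = ⋃_{i ∈ D} J_i is a 1-absorbing δ-primary ideal of R. -/
open Ideal

section

variable {R : Type*} [CommRing R] {ι : Type*} [Nonempty ι]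

theorem Ideal.iSup_ne_top_of_directed {J : ι → Ideal R} (hJ : Directed (· ≤ ·) J)
    (h : ∀ i, J i ≠ ⊤) : ⨆ i, J i ≠ ⊤ := by
  rw [Ne, Ideal.eq_top_iff_one, Submodule.mem_iSup_of_directed J hJ]
  rintro ⟨i, hi⟩
  exact h i ((Ideal.eq_top_iff_one _).mpr hi)

theorem IsOneAbsDeltaPrimary.iSup_of_directed {δ : Ideal R → Ideal R} (hδ : Monotone δ)
    {J : ι → Ideal R} (hJ : Directed (· ≤ ·) J) (h : ∀ i, IsOneAbsDeltaPrimary δ (J i)) :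
    IsOneAbsDeltaPrimary δ (⨆ i, J i) := by
  refine ⟨Ideal.iSup_ne_top_of_directed hJ fun i => (h i).1, fun a b c ha hb hc habc => ?_⟩
  obtain ⟨i, hi⟩ := (Submodule.mem_iSup_of_directed J hJ).mp habc
  exact ((h i).2 a b c ha hb hc hi).imp (Ideal.mem_iSup_of_mem i) (hδ (le_iSup J i) ·)

end

theorem directed_union_one_abs_delta_primary_general
    {R : Type*} [CommRing R]
    (δ : Ideal R → Ideal R) (hδ : ExpansionFunction R δ)
    {D : Type*} [Nonempty D] (J : D → Ideal R)
    (hdir : ∀ i j : D, ∃ k : D, J i ≤ J k ∧ J j ≤ J k)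
    (h : ∀ i : D, IsOneAbsDeltaPrimary δ (J i)) :
    (↑(⨆ i, J i) : Set R) = ⋃ i, (J i : Set R) ∧
      IsOneAbsDeltaPrimary δ (⨆ i, J i) :=
  ⟨Submodule.coe_iSup_of_directed J hdir,
    IsOneAbsDeltaPrimary.iSup_of_directed (fun _ _ hle => hδ.2 _ _ hle) hdir h⟩

theorem directed_union_one_abs_delta_primary
    {R : Type*} [CommRing R] [Nontrivial R]
    (δ : Ideal R → Ideal R) (hδ : ExpansionFunction R δ)
    {D : Type*} [Nonempty D] (J : D → Ideal R)
    (hdir : ∀ i j : D, ∃ k : D, J i ≤ J k ∧ J j ≤ J k)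
    (h : ∀ i : D, IsOneAbsDeltaPrimary δ (J i)) :
    (↑(⨆ i, J i) : Set R) = ⋃ i, (J i : Set R) ∧
      IsOneAbsDeltaPrimary δ (⨆ i, J i) :=
  directed_union_one_abs_delta_primary_general δ hδ J hdir h
end

section
/- Let I be a 1-absorbing δ-primary ideal of R such that √(δ(I)) = δ(√I). Then √I is a δ-primary ideal of R. -/
open Ideal

namespace IsOneAbsDeltaPrimary

variable {R : Type*} [CommRing R] {δ : Ideal R → Ideal R} {I : Ideal R}

/-- Apply the 1-absorbing condition to `a ^ n * a * b ^ n`, a multiple of `(a * b) ^ n ∈ I`. -/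
theorem mem_radical_or_mem_radical_delta (hI : IsOneAbsDeltaPrimary δ I) {a b : R}
    (ha : ¬IsUnit a) (hb : ¬IsUnit b) (hab : a * b ∈ I.radical) :
    a ∈ I.radical ∨ b ∈ (δ I).radical := by
  obtain ⟨n, hn⟩ := hab
  have hn0 : n ≠ 0 := by
    rintro rfl
    exact hI.1 ((Ideal.eq_top_iff_one I).mpr (by simpa using hn))
  have hmem : a ^ n * a * b ^ n ∈ I := by
    convert I.mul_mem_right a hn using 1
    ring
  rcases hI.2 (a ^ n) a (b ^ n) (mt (isUnit_pow_iff hn0).mp ha) ha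
      (mt (isUnit_pow_iff hn0).mp hb) hmem with h | h
  · exact .inl ⟨n + 1, by rwa [pow_succ]⟩
  · exact .inr ⟨n, h⟩

end IsOneAbsDeltaPrimary

theorem radical_of_one_abs_delta_primary_is_delta_primary_general
    {R : Type*} [CommRing R]
    (δ : Ideal R → Ideal R) (hδ : ExpansionFunction R δ)
    (I : Ideal R) (hI : IsOneAbsDeltaPrimary δ I)
    (hrad : (δ I).radical = δ I.radical) :
    IsDeltaPrimary δ I.radical := by
  refine ⟨Ideal.radical_eq_top.not.mpr hI.1, fun a b hab => ?_⟩
  by_cases hb : IsUnit b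
  · exact .inl ((Ideal.mul_unit_mem_iff_mem _ hb).mp hab)
  by_cases ha : IsUnit a
  · exact .inr (hδ.1 _ ((Ideal.unit_mul_mem_iff_mem _ ha).mp hab))
  exact hrad ▸ hI.mem_radical_or_mem_radical_delta ha hb hab

theorem radical_of_one_abs_delta_primary_is_delta_primary
    {R : Type*} [CommRing R] [Nontrivial R]
    (δ : Ideal R → Ideal R) (hδ : ExpansionFunction R δ)
    (I : Ideal R) (hI : IsOneAbsDeltaPrimary δ I)
    (hrad : (δ I).radical = δ I.radical) :
    IsDeltaPrimary δ I.radical :=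
  radical_of_one_abs_delta_primary_is_delta_primary_general δ hδ I hI hrad
end

section
/- A proper ideal I of R is a 1-absorbing δ-primary ideal if and only if, whenever I₁I₂I₃ ⊆ I for some proper ideals I₁, I₂, I₃ of R, then I₁I₂ ⊆ I or I₃ ⊆ δ(I). -/
open Ideal

theorem Ideal.not_isUnit_of_mem_of_ne_top {R : Type*} [Semiring R] {J : Ideal R} {x : R}
    (hJ : J ≠ ⊤) (hx : x ∈ J) : ¬IsUnit x :=
  mt (J.eq_top_of_isUnit_mem hx) hJ

section

variable {R : Type*} [CommRing R] {δ : Ideal R → Ideal R} {I : Ideal R}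

theorem IsOneAbsDeltaPrimary.mul_le_or_le_delta (hI : IsOneAbsDeltaPrimary δ I)
    {I₁ I₂ I₃ : Ideal R} (h₁ : I₁ ≠ ⊤) (h₂ : I₂ ≠ ⊤) (h₃ : I₃ ≠ ⊤)
    (hle : I₁ * I₂ * I₃ ≤ I) : I₁ * I₂ ≤ I ∨ I₃ ≤ δ I := by
  refine or_iff_not_imp_right.mpr fun hI₃ => ?_
  obtain ⟨c, hc, hcδ⟩ := SetLike.not_le_iff_exists.mp hI₃
  refine mul_le.mpr fun a ha b hb => ?_
  have habc : a * b * c ∈ I := hle (mul_mem_mul (mul_mem_mul ha hb) hc)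
  exact (hI.2 a b c (not_isUnit_of_mem_of_ne_top h₁ ha) (not_isUnit_of_mem_of_ne_top h₂ hb)
    (not_isUnit_of_mem_of_ne_top h₃ hc) habc).resolve_right hcδ

theorem isOneAbsDeltaPrimary_of_mul_le_or_le_delta (hI : I ≠ ⊤)
    (h : ∀ I₁ I₂ I₃ : Ideal R, I₁ ≠ ⊤ → I₂ ≠ ⊤ → I₃ ≠ ⊤ →
      I₁ * I₂ * I₃ ≤ I → I₁ * I₂ ≤ I ∨ I₃ ≤ δ I) :
    IsOneAbsDeltaPrimary δ I := by
  refine ⟨hI, fun a b c ha hb hc habc => ?_⟩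
  have hspan : span {a} * span {b} * span {c} ≤ I := by
    rwa [span_singleton_mul_span_singleton, span_singleton_mul_span_singleton,
      span_singleton_le_iff_mem]
  refine (h _ _ _ (span_singleton_ne_top ha) (span_singleton_ne_top hb)
    (span_singleton_ne_top hc) hspan).imp (fun hab => ?_)
    (fun hcδ => hcδ (mem_span_singleton_self c))
  rwa [span_singleton_mul_span_singleton, span_singleton_le_iff_mem] at hab

end

theorem one_abs_delta_primary_iff_ideal_version_general
    {R : Type*} [CommRing R]
    (δ : Ideal R → Ideal R)
    (I : Ideal R) (hIproper : I ≠ ⊤) :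
    IsOneAbsDeltaPrimary δ I ↔
      ∀ I₁ I₂ I₃ : Ideal R, I₁ ≠ ⊤ → I₂ ≠ ⊤ → I₃ ≠ ⊤ →
        I₁ * I₂ * I₃ ≤ I → I₁ * I₂ ≤ I ∨ I₃ ≤ δ I :=
  ⟨fun h _ _ _ h₁ h₂ h₃ hle => h.mul_le_or_le_delta h₁ h₂ h₃ hle,
    isOneAbsDeltaPrimary_of_mul_le_or_le_delta hIproper⟩

theorem one_abs_delta_primary_iff_ideal_version
    {R : Type*} [CommRing R] [Nontrivial R]
    (δ : Ideal R → Ideal R) (hδ : ExpansionFunction R δ)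
    (I : Ideal R) (hIproper : I ≠ ⊤) :
    IsOneAbsDeltaPrimary δ I ↔
      ∀ I₁ I₂ I₃ : Ideal R, I₁ ≠ ⊤ → I₂ ≠ ⊤ → I₃ ≠ ⊤ →
        I₁ * I₂ * I₃ ≤ I → I₁ * I₂ ≤ I ∨ I₃ ≤ δ I :=
  one_abs_delta_primary_iff_ideal_version_general δ I hIproper
end

section
/- Let δ be an intersection preserving expansion function of the ideals of R, i.e., δ(I₁ ∩ I₂ ∩ ... ∩ Iₙ) = δ(I₁) ∩ δ(I₂) ∩ ... ∩ δ(Iₙ) for any finitely many ideals I₁, ..., Iₙ of R. If I₁, I₂, ..., Iₙ are 1-absorbing δ-primary ideals of R and there is an ideal P with δ(I_i) = P for all i ∈ {1, 2, ..., n}, then I₁ ∩ I₂ ∩ ... ∩ Iₙ is a 1-absorbing δ-primary ideal of R. -/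
open Ideal

theorem IsOneAbsDeltaPrimary.iInf {R ι : Type*} [CommRing R] [Nonempty ι]
    {δ : Ideal R → Ideal R} {f : ι → Ideal R} (h : ∀ i, IsOneAbsDeltaPrimary δ (f i))
    (hδ : ∀ i, δ (f i) ≤ δ (⨅ i, f i)) : IsOneAbsDeltaPrimary δ (⨅ i, f i) := by
  obtain ⟨i₀⟩ := ‹Nonempty ι›
  refine ⟨ne_top_of_le_ne_top (h i₀).1 (iInf_le f i₀), fun a b c ha hb hc habc => ?_⟩
  by_cases hab : a * b ∈ ⨅ i, f i
  · exact Or.inl hab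
  · obtain ⟨i, hi⟩ := not_forall.mp (mt Ideal.mem_iInf.mpr hab)
    exact .inr <| hδ i <|
      ((h i).2 a b c ha hb hc (Ideal.mem_iInf.mp habc i)).resolve_left hi

theorem inter_of_one_abs_delta_primary_same_delta_general
    {R : Type*} [CommRing R]
    (δ : Ideal R → Ideal R)
    (hpres : ∀ (m : ℕ) (g : Fin (m + 1) → Ideal R),
      δ (⨅ i, g i) = ⨅ i, δ (g i))
    (n : ℕ) (f : Fin (n + 1) → Ideal R)
    (h : ∀ i, IsOneAbsDeltaPrimary δ (f i))
    (P : Ideal R) (hP : ∀ i, δ (f i) = P) :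
    IsOneAbsDeltaPrimary δ (⨅ i, f i) := by
  refine IsOneAbsDeltaPrimary.iInf h fun i => ?_
  rw [hpres n f, hP i]
  exact le_iInf fun j => (hP j).ge

theorem inter_of_one_abs_delta_primary_same_delta
    {R : Type*} [CommRing R] [Nontrivial R]
    (δ : Ideal R → Ideal R) (hδ : ExpansionFunction R δ)
    (hpres : ∀ (m : ℕ) (g : Fin (m + 1) → Ideal R),
      δ (⨅ i, g i) = ⨅ i, δ (g i))
    (n : ℕ) (f : Fin (n + 1) → Ideal R)
    (h : ∀ i, IsOneAbsDeltaPrimary δ (f i))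
    (P : Ideal R) (hP : ∀ i, δ (f i) = P) :
    IsOneAbsDeltaPrimary δ (⨅ i, f i) :=
  inter_of_one_abs_delta_primary_same_delta_general δ hpres n f h P hP
end

section
/- Every proper principal ideal of R is a 1-absorbing δ-primary ideal of R if and only if every proper ideal of R is a 1-absorbing δ-primary ideal of R. -/
open Ideal

/-
A triple product `a * b * c ∈ I` of nonunits already lies in the proper principal ideal
`(a * b * c) ⊆ I`; the conclusion for that ideal transfers to `I` because `δ` is monotone.
-/

theorem ExpansionFunction.monotone {R : Type*} [CommRing R] {δ : Ideal R → Ideal R}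
    (hδ : ExpansionFunction R δ) : Monotone δ :=
  fun J I hle => hδ.2 I J hle

theorem IsOneAbsDeltaPrimary.mul_mem_or_mem_of_le {R : Type*} [CommRing R]
    {δ : Ideal R → Ideal R} (hδ : Monotone δ) {I J : Ideal R} (hJ : IsOneAbsDeltaPrimary δ J)
    (hle : J ≤ I) {a b c : R} (ha : ¬ IsUnit a) (hb : ¬ IsUnit b) (hc : ¬ IsUnit c)
    (habc : a * b * c ∈ J) : a * b ∈ I ∨ c ∈ δ I :=
  (hJ.2 a b c ha hb hc habc).imp (@hle _) (@hδ J I hle _)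

theorem principal_one_abs_delta_primary_iff_all_general
    {R : Type*} [CommRing R]
    (δ : Ideal R → Ideal R) (hδ : ExpansionFunction R δ) :
    (∀ I : Ideal R, I.IsPrincipal → I ≠ ⊤ → IsOneAbsDeltaPrimary δ I) ↔
      (∀ I : Ideal R, I ≠ ⊤ → IsOneAbsDeltaPrimary δ I) := by
  refine ⟨fun h I hI => ⟨hI, fun a b c ha hb hc habc => ?_⟩, fun h I _ hI => h I hI⟩
  have hprod : ¬ IsUnit (a * b * c) := fun hu =>
    ha (isUnit_of_mul_isUnit_left (isUnit_of_mul_isUnit_left hu))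
  have hspan : IsOneAbsDeltaPrimary δ (span {a * b * c}) :=
    h _ ⟨⟨_, rfl⟩⟩ (mt span_singleton_eq_top.mp hprod)
  exact hspan.mul_mem_or_mem_of_le hδ.monotone ((span_singleton_le_iff_mem I).mpr habc)
    ha hb hc (mem_span_singleton_self _)

theorem principal_one_abs_delta_primary_iff_all
    {R : Type*} [CommRing R] [Nontrivial R]
    (δ : Ideal R → Ideal R) (hδ : ExpansionFunction R δ) :
    (∀ I : Ideal R, I.IsPrincipal → I ≠ ⊤ → IsOneAbsDeltaPrimary δ I) ↔
      (∀ I : Ideal R, I ≠ ⊤ → IsOneAbsDeltaPrimary δ I) :=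
  principal_one_abs_delta_primary_iff_all_general δ hδ
end

section
/- Let δ be an expansion function of the ideals of R satisfying condition (*) (δ(I) ≠ R for every proper ideal I of R), δ(Jac(R)) = Jac(R), and δ(xI) = xδ(I) for every proper ideal I of R and every x ∈ R. Then the following are equivalent: (i) every proper principal ideal of R is a 1-absorbing δ-primary ideal; (ii) every proper ideal of R is a 1-absorbing δ-primary ideal; (iii) R is a local ring and Jac(R)² = (0), where Jac(R) denotes the Jacobson radical of R. -/
open Ideal

/-!
Applying the definition to the principal ideal `(a b c)` and the triple `a, b, c`, and using
`δ (a b c) = (a b) δ (c)`, gives for nonunits `a, b, c`: either `a b c ∣ a b`, or `c = a b d`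
with `d ∈ δ (c)`. For the triple `a, a, 1 - a` both alternatives make `a` or `1 - a` a unit, so
`R` is local. For `x, y ∈ Jac(R)` and the triple `x, y, x y` both alternatives read `x y = x y d`
with `d ∈ Jac(R)`, hence `x y = 0`. Conversely, in a local ring with `Jac(R)² = 0` the product of
any two nonunits is `0`, which lies in every ideal.
-/

section

variable {R : Type*} [CommRing R]

theorem not_isUnit_of_mem_jacobson_bot [Nontrivial R] {x : R}
    (hx : x ∈ (⊥ : Ideal R).jacobson) : ¬IsUnit x := fun hu =>
  bot_ne_top (jacobson_eq_top_iff.mp (eq_top_of_isUnit_mem _ hx hu))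

theorem eq_zero_of_eq_mul_of_mem_jacobson_bot {z d : R} (hd : d ∈ (⊥ : Ideal R).jacobson)
    (hz : z = z * d) : z = 0 :=
  (IsUnit.mul_left_eq_zero (mem_jacobson_bot.mp hd (-1))).mp (by linear_combination hz)

variable {δ : Ideal R → Ideal R}

theorem dvd_or_eq_mul_of_mem_delta
    (hsmul : ∀ (x : R) (I : Ideal R), I ≠ ⊤ → δ (span {x} * I) = span {x} * δ I)
    (h : ∀ I : Ideal R, I.IsPrincipal → I ≠ ⊤ → IsOneAbsDeltaPrimary δ I)
    {a b c : R} (ha : ¬IsUnit a) (hb : ¬IsUnit b) (hc : ¬IsUnit c) :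
    a * b * c ∣ a * b ∨ ∃ d ∈ δ (span {c}), c = a * b * d := by
  have hI : span {a * b * c} ≠ ⊤ := fun htop =>
    hc (isUnit_of_mul_isUnit_right (span_singleton_eq_top.mp htop))
  rcases (h (span {a * b * c}) ⟨⟨_, rfl⟩⟩ hI).2 a b c ha hb hc (mem_span_singleton_self _)
    with hab | hcδ
  · exact Or.inl (mem_span_singleton.mp hab)
  · rw [← span_singleton_mul_span_singleton (a * b) c,
      hsmul _ _ (mt span_singleton_eq_top.mp hc)] at hcδ
    obtain ⟨d, hd, hdc⟩ := mem_span_singleton_mul.mp hcδ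
    exact Or.inr ⟨d, hd, hdc.symm⟩

theorem isLocalRing_of_principal_isOneAbsDeltaPrimary [Nontrivial R]
    (hsmul : ∀ (x : R) (I : Ideal R), I ≠ ⊤ → δ (span {x} * I) = span {x} * δ I)
    (h : ∀ I : Ideal R, I.IsPrincipal → I ≠ ⊤ → IsOneAbsDeltaPrimary δ I) :
    IsLocalRing R := by
  refine IsLocalRing.of_isUnit_or_isUnit_one_sub_self fun a =>
    or_iff_not_and_not.mpr fun ⟨ha, hb⟩ => ?_
  rcases dvd_or_eq_mul_of_mem_delta hsmul h ha ha hb with ⟨t, ht⟩ | ⟨d, -, hd⟩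
  · exact hb (IsUnit.of_mul_eq_one (a * a * t + a + 1) (by linear_combination -ht))
  · exact ha (IsUnit.of_mul_eq_one (1 + a * d) (by linear_combination -hd))

theorem jacobson_bot_sq_eq_bot_of_principal_isOneAbsDeltaPrimary [Nontrivial R]
    (hδ : Monotone δ) (hjac : δ (⊥ : Ideal R).jacobson ≤ (⊥ : Ideal R).jacobson)
    (hsmul : ∀ (x : R) (I : Ideal R), I ≠ ⊤ → δ (span {x} * I) = span {x} * δ I)
    (h : ∀ I : Ideal R, I.IsPrincipal → I ≠ ⊤ → IsOneAbsDeltaPrimary δ I) :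
    (⊥ : Ideal R).jacobson ^ 2 = ⊥ := by
  rw [pow_two, eq_bot_iff, mul_le]
  intro x hx y hy
  have hxy : x * y ∈ (⊥ : Ideal R).jacobson := mul_mem_right y _ hx
  rw [mem_bot]
  rcases dvd_or_eq_mul_of_mem_delta hsmul h (not_isUnit_of_mem_jacobson_bot hx)
    (not_isUnit_of_mem_jacobson_bot hy) (not_isUnit_of_mem_jacobson_bot hxy)
    with ⟨t, ht⟩ | ⟨d, hd, hxyd⟩
  · exact eq_zero_of_eq_mul_of_mem_jacobson_bot (mul_mem_right t _ hxy)
      (by linear_combination ht)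
  · exact eq_zero_of_eq_mul_of_mem_jacobson_bot
      (hjac (hδ ((span_singleton_le_iff_mem _).mpr hxy) hd)) hxyd

theorem isOneAbsDeltaPrimary_of_jacobson_bot_sq_eq_bot [IsLocalRing R]
    (hJ : (⊥ : Ideal R).jacobson ^ 2 = ⊥) {I : Ideal R} (hI : I ≠ ⊤) :
    IsOneAbsDeltaPrimary δ I := by
  refine ⟨hI, fun a b _ ha hb _ _ => Or.inl ?_⟩
  have hab : a * b ∈ (⊥ : Ideal R).jacobson ^ 2 := by
    rw [pow_two, IsLocalRing.jacobson_eq_maximalIdeal ⊥ bot_ne_top]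
    exact mul_mem_mul ((IsLocalRing.mem_maximalIdeal a).mpr ha)
      ((IsLocalRing.mem_maximalIdeal b).mpr hb)
  rw [hJ, mem_bot] at hab
  exact hab ▸ I.zero_mem

end

theorem char_every_ideal_one_abs_delta_primary_general
    {R : Type*} [CommRing R] [Nontrivial R]
    (δ : Ideal R → Ideal R) (hδ : ExpansionFunction R δ)
    (hjac : δ ((⊥ : Ideal R).jacobson) = (⊥ : Ideal R).jacobson)
    (hsmul : ∀ (x : R) (I : Ideal R), I ≠ ⊤ → δ (span {x} * I) = span {x} * δ I) :
    ((∀ I : Ideal R, I.IsPrincipal → I ≠ ⊤ → IsOneAbsDeltaPrimary δ I) ↔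
      (∀ I : Ideal R, I ≠ ⊤ → IsOneAbsDeltaPrimary δ I)) ∧
    ((∀ I : Ideal R, I ≠ ⊤ → IsOneAbsDeltaPrimary δ I) ↔
      (IsLocalRing R ∧ ((⊥ : Ideal R).jacobson) ^ 2 = ⊥)) := by
  have principal_to_local
      (h : ∀ I : Ideal R, I.IsPrincipal → I ≠ ⊤ → IsOneAbsDeltaPrimary δ I) :
      IsLocalRing R ∧ (⊥ : Ideal R).jacobson ^ 2 = ⊥ :=
    ⟨isLocalRing_of_principal_isOneAbsDeltaPrimary hsmul h,
      jacobson_bot_sq_eq_bot_of_principal_isOneAbsDeltaPrimary (fun _ _ hle => hδ.2 _ _ hle)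
        hjac.le hsmul h⟩
  have local_to_all : IsLocalRing R ∧ (⊥ : Ideal R).jacobson ^ 2 = ⊥ →
      ∀ I : Ideal R, I ≠ ⊤ → IsOneAbsDeltaPrimary δ I := fun ⟨_, hJ⟩ _ hI =>
    isOneAbsDeltaPrimary_of_jacobson_bot_sq_eq_bot hJ hI
  have all_to_principal (h : ∀ I : Ideal R, I ≠ ⊤ → IsOneAbsDeltaPrimary δ I) :
      ∀ I : Ideal R, I.IsPrincipal → I ≠ ⊤ → IsOneAbsDeltaPrimary δ I :=
    fun I _ hI => h I hI
  exact ⟨⟨local_to_all ∘ principal_to_local, all_to_principal⟩,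
    ⟨principal_to_local ∘ all_to_principal, local_to_all⟩⟩

theorem char_every_ideal_one_abs_delta_primary
    {R : Type*} [CommRing R] [Nontrivial R]
    (δ : Ideal R → Ideal R) (hδ : ExpansionFunction R δ)
    (hstar : ∀ I : Ideal R, I ≠ ⊤ → δ I ≠ ⊤)
    (hjac : δ ((⊥ : Ideal R).jacobson) = (⊥ : Ideal R).jacobson)
    (hsmul : ∀ (x : R) (I : Ideal R), I ≠ ⊤ → δ (span {x} * I) = span {x} * δ I) :
    ((∀ I : Ideal R, I.IsPrincipal → I ≠ ⊤ → IsOneAbsDeltaPrimary δ I) ↔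
      (∀ I : Ideal R, I ≠ ⊤ → IsOneAbsDeltaPrimary δ I)) ∧
    ((∀ I : Ideal R, I ≠ ⊤ → IsOneAbsDeltaPrimary δ I) ↔
      (IsLocalRing R ∧ ((⊥ : Ideal R).jacobson) ^ 2 = ⊥)) :=
  char_every_ideal_one_abs_delta_primary_general δ hδ hjac hsmul
end

section
/- For a commutative ring R the following are equivalent: (i) every proper ideal of R is a 1-absorbing prime ideal; (ii) every proper principal ideal of R is a 1-absorbing prime ideal; (iii) R is a local ring and Jac(R)² = (0), where Jac(R) denotes the Jacobson radical of R. -/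
/-!
A local ring whose maximal ideal squares to zero kills every product of two nonunits, so every
proper ideal is trivially 1-absorbing prime. Conversely, suppose every proper principal ideal is
1-absorbing prime. Two distinct maximal ideals `m ∋ b`, `m' ∋ a` with `a ∉ m`, `b ∉ m'` are
ruled out by the ideal `(a²b)`, so `R` is local. Applied to `(a³)`, the hypothesis gives
`a² = r a · a²` or `a = r a² · a`, and since `1 - r a` is a unit, `a² = 0` for every
nonunit `a`. Finally `(0)` being 1-absorbing prime and `a · b · a = a² b = 0` give `a b = 0` for
all nonunits `a, b`.
-/

open Ideal

namespace IsLocalRing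

variable {R : Type*} [CommRing R] [IsLocalRing R]

theorem eq_zero_of_eq_mul_of_not_isUnit {x y : R} (hy : ¬IsUnit y) (h : x = y * x) : x = 0 :=
  (isUnit_one_sub_self_of_mem_nonunits y hy).mul_left_eq_zero.mp (by linear_combination h)

theorem sq_maximalIdeal_eq_bot_iff :
    maximalIdeal R ^ 2 = ⊥ ↔ ∀ a b : R, ¬IsUnit a → ¬IsUnit b → a * b = 0 := by
  simp only [pow_two, eq_bot_iff, Ideal.mul_le, mem_maximalIdeal, mem_nonunits_iff,
    Ideal.mem_bot]
  exact ⟨fun h a b ha hb => h a ha b hb, fun h a ha b hb => h a b ha hb⟩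

end IsLocalRing

section OneAbsPrime

variable {R : Type*} [CommRing R]

theorem isOneAbsPrime_of_mul_eq_zero (h : ∀ a b : R, ¬IsUnit a → ¬IsUnit b → a * b = 0)
    {I : Ideal R} (hI : I ≠ ⊤) : IsOneAbsPrime I :=
  ⟨hI, fun a b _ ha hb _ _ => Or.inl (h a b ha hb ▸ I.zero_mem)⟩

theorem isLocalRing_of_isOneAbsPrime_span_singleton [Nontrivial R]
    (h : ∀ x : R, ¬IsUnit x → IsOneAbsPrime (span {x})) : IsLocalRing R := by
  obtain ⟨m, hm⟩ := Ideal.exists_maximal R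
  refine IsLocalRing.of_unique_max_ideal ⟨m, hm, fun m' hm' => ?_⟩
  by_contra hne
  obtain ⟨a, ham', ham⟩ :=
    SetLike.not_le_iff_exists.mp fun hle => hne (hm'.eq_of_le hm.ne_top hle)
  obtain ⟨b, hbm, hbm'⟩ :=
    SetLike.not_le_iff_exists.mp fun hle => hne (hm.eq_of_le hm'.ne_top hle).symm
  have ha : ¬IsUnit a := fun hu => m'.notMem_of_isUnit hu ham'
  have hb : ¬IsUnit b := fun hu => m.notMem_of_isUnit hu hbm
  have hab := (h (a * a * b) fun hu => hb (isUnit_of_mul_isUnit_right hu)).2 a a b ha ha hb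
    (mem_span_singleton_self _)
  rcases hab with haa | hb'
  · have : span {a * a * b} ≤ m := (span_singleton_le_iff_mem m).mpr (m.mul_mem_left _ hbm)
    exact ham ((hm.isPrime.mem_or_mem (this haa)).elim id id)
  · have : span {a * a * b} ≤ m' :=
      (span_singleton_le_iff_mem m').mpr (m'.mul_mem_right _ (m'.mul_mem_right _ ham'))
    exact hbm' (this hb')

theorem mul_self_eq_zero_of_isOneAbsPrime_span_singleton [IsLocalRing R]
    (h : ∀ x : R, ¬IsUnit x → IsOneAbsPrime (span {x})) {a : R} (ha : ¬IsUnit a) :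
    a * a = 0 := by
  have hra (r : R) : ¬IsUnit (r * a) := fun hu => ha (isUnit_of_mul_isUnit_right hu)
  rcases (h (a * a * a) fun hu => ha (isUnit_of_mul_isUnit_right hu)).2 a a a ha ha ha
    (mem_span_singleton_self _) with haa | ha'
  · obtain ⟨r, hr⟩ := mem_span_singleton'.mp haa
    exact IsLocalRing.eq_zero_of_eq_mul_of_not_isUnit (hra r) (by linear_combination -hr)
  · obtain ⟨r, hr⟩ := mem_span_singleton'.mp ha'
    rw [IsLocalRing.eq_zero_of_eq_mul_of_not_isUnit (x := a) (hra (r * a))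
      (by linear_combination -hr), mul_zero]

theorem mul_eq_zero_of_isOneAbsPrime_span_singleton [IsLocalRing R]
    (h : ∀ x : R, ¬IsUnit x → IsOneAbsPrime (span {x})) {a b : R} (ha : ¬IsUnit a)
    (hb : ¬IsUnit b) : a * b = 0 := by
  have hbot : IsOneAbsPrime (⊥ : Ideal R) := span_singleton_zero (α := R) ▸ h 0 not_isUnit_zero
  have haba : a * b * a ∈ (⊥ : Ideal R) := by
    rw [mem_bot, mul_right_comm, mul_self_eq_zero_of_isOneAbsPrime_span_singleton h ha, zero_mul]
  rcases hbot.2 a b a ha hb ha haba with hab | ha0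
  · exact mem_bot.mp hab
  · rw [mem_bot.mp ha0, zero_mul]

end OneAbsPrime

theorem char_every_ideal_one_abs_prime
    {R : Type*} [CommRing R] [Nontrivial R] :
    ((∀ I : Ideal R, I ≠ ⊤ → IsOneAbsPrime I) ↔
      (∀ I : Ideal R, I.IsPrincipal → I ≠ ⊤ → IsOneAbsPrime I)) ∧
    ((∀ I : Ideal R, I.IsPrincipal → I ≠ ⊤ → IsOneAbsPrime I) ↔
      (IsLocalRing R ∧ ((⊥ : Ideal R).jacobson) ^ 2 = ⊥)) := by
  have principal_to_local (h : ∀ I : Ideal R, I.IsPrincipal → I ≠ ⊤ → IsOneAbsPrime I) :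
      IsLocalRing R ∧ ((⊥ : Ideal R).jacobson) ^ 2 = ⊥ := by
    have hspan (x : R) (hx : ¬IsUnit x) : IsOneAbsPrime (span {x}) :=
      h _ ⟨x, rfl⟩ (mt span_singleton_eq_top.mp hx)
    have := isLocalRing_of_isOneAbsPrime_span_singleton hspan
    rw [IsLocalRing.jacobson_eq_maximalIdeal ⊥ bot_ne_top, IsLocalRing.sq_maximalIdeal_eq_bot_iff]
    exact ⟨this, fun a b => mul_eq_zero_of_isOneAbsPrime_span_singleton hspan⟩
  have local_to_all : IsLocalRing R ∧ ((⊥ : Ideal R).jacobson) ^ 2 = ⊥ →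
      ∀ I : Ideal R, I ≠ ⊤ → IsOneAbsPrime I := by
    rintro ⟨_, hsq⟩ I hI
    rw [IsLocalRing.jacobson_eq_maximalIdeal ⊥ bot_ne_top,
      IsLocalRing.sq_maximalIdeal_eq_bot_iff] at hsq
    exact isOneAbsPrime_of_mul_eq_zero hsq hI
  exact ⟨⟨fun h I _ => h I, fun h => local_to_all (principal_to_local h)⟩,
    ⟨principal_to_local, fun hL I _ => local_to_all hL I⟩⟩
end

section
/- Let f : R → S be a ring homomorphism such that f(a) is a nonunit of S for every nonunit element a of R, and let δ and γ be expansion functions of the ideals of R and S respectively such that δ(f⁻¹(J)) = f⁻¹(γ(J)) for every ideal J of S (f is a δγ-homomorphism). If J is a 1-absorbing γ-primary ideal of S, then f⁻¹(J) is a 1-absorbing δ-primary ideal of R. -/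
open Ideal

theorem IsOneAbsDeltaPrimary.comap {R S : Type*} [CommRing R] [CommRing S]
    (f : R →+* S) [IsLocalHom f] {δ : Ideal R → Ideal R} {γ : Ideal S → Ideal S}
    {J : Ideal S} (hJ : IsOneAbsDeltaPrimary γ J) (hγδ : (γ J).comap f ≤ δ (J.comap f)) :
    IsOneAbsDeltaPrimary δ (J.comap f) := by
  refine ⟨comap_ne_top f hJ.1, fun a b c ha hb hc habc => ?_⟩
  have habc' : f a * f b * f c ∈ J := by simpa only [mem_comap, map_mul] using habc
  rcases hJ.2 (f a) (f b) (f c) (mt (IsUnit.of_map f a) ha) (mt (IsUnit.of_map f b) hb)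
      (mt (IsUnit.of_map f c) hc) habc' with hab | hc'
  · exact Or.inl (by simpa only [mem_comap, map_mul] using hab)
  · exact Or.inr (hγδ hc')

theorem comap_one_abs_gamma_primary_general
    {R S : Type*} [CommRing R] [CommRing S]
    (f : R →+* S) (hf : ∀ a : R, ¬ IsUnit a → ¬ IsUnit (f a))
    (δ : Ideal R → Ideal R)
    (γ : Ideal S → Ideal S)
    (hcomm : ∀ J : Ideal S, δ (J.comap f) = (γ J).comap f)
    (J : Ideal S) (hJ : IsOneAbsDeltaPrimary γ J) :
    IsOneAbsDeltaPrimary δ (J.comap f) :=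
  have : IsLocalHom f := ⟨fun a => not_imp_not.mp (hf a)⟩
  hJ.comap f (hcomm J).ge

theorem comap_one_abs_gamma_primary
    {R S : Type*} [CommRing R] [CommRing S] [Nontrivial R] [Nontrivial S]
    (f : R →+* S) (hf : ∀ a : R, ¬ IsUnit a → ¬ IsUnit (f a))
    (δ : Ideal R → Ideal R) (hδ : ExpansionFunction R δ)
    (γ : Ideal S → Ideal S) (hγ : ExpansionFunction S γ)
    (hcomm : ∀ J : Ideal S, δ (J.comap f) = (γ J).comap f)
    (J : Ideal S) (hJ : IsOneAbsDeltaPrimary γ J) :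
    IsOneAbsDeltaPrimary δ (J.comap f) :=
  comap_one_abs_gamma_primary_general f hf δ γ hcomm J hJ
end

section
/- Let R₁ and R₂ be commutative rings, R = R₁ × R₂, let δ₁ and δ₂ be expansion functions of the ideals of R₁ and R₂ respectively, and let δ_× be the expansion function of the ideals of R defined by δ_×(I₁ × I₂) = δ₁(I₁) × δ₂(I₂). For a proper ideal I of R the following are equivalent: (1) I is a 1-absorbing δ_×-primary ideal of R; (2) I is a δ_×-primary ideal of R; (3) either I = I₁ × R₂ where I₁ is a δ₁-primary ideal of R₁, or I = R₁ × I₂ where I₂ is a δ₂-primary ideal of R₂, or I = I₁ × I₂ where I₁ and I₂ are proper ideals of R₁ and R₂ respectively with δ₁(I₁) = R₁ and δ₂(I₂) = R₂. -/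
open Ideal

theorem isDeltaPrimary_of_nonunits {R : Type*} [CommRing R] {δ : Ideal R → Ideal R}
    (hδ : ∀ J, J ≤ δ J) {I : Ideal R} (hI : I ≠ ⊤)
    (h : ∀ a b : R, ¬IsUnit a → ¬IsUnit b → a * b ∈ I → a ∈ I ∨ b ∈ δ I) :
    IsDeltaPrimary δ I := by
  refine ⟨hI, fun a b hab => ?_⟩
  by_cases ha : IsUnit a
  · exact .inr (hδ I ((I.unit_mul_mem_iff_mem ha).1 hab))
  by_cases hb : IsUnit b
  · exact .inl ((I.mul_unit_mem_iff_mem hb).1 hab)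
  exact h a b ha hb hab

section Prod

variable {R₁ R₂ : Type*} [CommRing R₁] [CommRing R₂] {δ₁ : Ideal R₁ → Ideal R₁}
  {δ₂ : Ideal R₂ → Ideal R₂} {δx : Ideal (R₁ × R₂) → Ideal (R₁ × R₂)}

theorem isDeltaPrimary_prod_top (hδ₂ : ∀ J, J ≤ δ₂ J)
    (hδx : ∀ I₁ I₂, δx (I₁.prod I₂) = (δ₁ I₁).prod (δ₂ I₂)) {I₁ : Ideal R₁}
    (h : IsDeltaPrimary δ₁ I₁) : IsDeltaPrimary δx (I₁.prod ⊤) := by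
  refine ⟨fun htop => h.1 (prod_eq_top_iff.1 htop).1, fun a b hab => ?_⟩
  rw [hδx, top_le_iff.1 (hδ₂ ⊤)]
  simpa only [mem_prod, Submodule.mem_top, and_true] using h.2 a.1 b.1 ((mem_prod _ _).1 hab).1

theorem isDeltaPrimary_top_prod (hδ₁ : ∀ J, J ≤ δ₁ J)
    (hδx : ∀ I₁ I₂, δx (I₁.prod I₂) = (δ₁ I₁).prod (δ₂ I₂)) {I₂ : Ideal R₂}
    (h : IsDeltaPrimary δ₂ I₂) : IsDeltaPrimary δx (Ideal.prod ⊤ I₂) := by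
  refine ⟨fun htop => h.1 (prod_eq_top_iff.1 htop).2, fun a b hab => ?_⟩
  rw [hδx, top_le_iff.1 (hδ₁ ⊤)]
  simpa only [mem_prod, Submodule.mem_top, true_and] using h.2 a.2 b.2 ((mem_prod _ _).1 hab).2

theorem isDeltaPrimary_prod_of_delta_eq_top
    (hδx : ∀ I₁ I₂, δx (I₁.prod I₂) = (δ₁ I₁).prod (δ₂ I₂)) {I₁ : Ideal R₁} {I₂ : Ideal R₂}
    (hI₁ : I₁ ≠ ⊤) (h₁ : δ₁ I₁ = ⊤) (h₂ : δ₂ I₂ = ⊤) : IsDeltaPrimary δx (I₁.prod I₂) :=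
  ⟨fun htop => hI₁ (prod_eq_top_iff.1 htop).1, fun _ _ _ => .inr (by simp [hδx, h₁, h₂])⟩

theorem IsOneAbsDeltaPrimary.isDeltaPrimary_of_prod_top [Nontrivial R₂] (hδ₁ : ∀ J, J ≤ δ₁ J)
    (hδx : ∀ I₁ I₂, δx (I₁.prod I₂) = (δ₁ I₁).prod (δ₂ I₂)) {I₁ : Ideal R₁}
    (h : IsOneAbsDeltaPrimary δx (I₁.prod ⊤)) : IsDeltaPrimary δ₁ I₁ := by
  refine isDeltaPrimary_of_nonunits hδ₁ (fun htop => h.1 (by rw [htop, prod_top_top]))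
    fun a b ha hb hab => ?_
  have key := h.2 (a, 1) (1, 0) (b, 1) (by simp [Prod.isUnit_iff, ha]) (by simp [Prod.isUnit_iff])
    (by simp [Prod.isUnit_iff, hb]) (by simpa [mem_prod] using hab)
  simp only [Prod.mk_mul_mk, mul_zero, mul_one, mem_prod, zero_mem, and_true, hδx] at key
  exact key.imp_right And.left

theorem IsOneAbsDeltaPrimary.isDeltaPrimary_of_top_prod [Nontrivial R₁] (hδ₂ : ∀ J, J ≤ δ₂ J)
    (hδx : ∀ I₁ I₂, δx (I₁.prod I₂) = (δ₁ I₁).prod (δ₂ I₂)) {I₂ : Ideal R₂}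
    (h : IsOneAbsDeltaPrimary δx (Ideal.prod ⊤ I₂)) : IsDeltaPrimary δ₂ I₂ := by
  refine isDeltaPrimary_of_nonunits hδ₂ (fun htop => h.1 (by rw [htop, prod_top_top]))
    fun a b ha hb hab => ?_
  have key := h.2 (1, a) (0, 1) (1, b) (by simp [Prod.isUnit_iff, ha]) (by simp [Prod.isUnit_iff])
    (by simp [Prod.isUnit_iff, hb]) (by simpa [mem_prod] using hab)
  simp only [Prod.mk_mul_mk, mul_zero, mul_one, mem_prod, zero_mem, true_and, hδx] at key
  exact key.imp_right And.right

variable [Nontrivial R₁] [Nontrivial R₂]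

theorem IsOneAbsDeltaPrimary.delta_left_eq_top_of_prod
    (hδx : ∀ I₁ I₂, δx (I₁.prod I₂) = (δ₁ I₁).prod (δ₂ I₂)) {I₁ : Ideal R₁} {I₂ : Ideal R₂}
    (hI₂ : I₂ ≠ ⊤) (h : IsOneAbsDeltaPrimary δx (I₁.prod I₂)) : δ₁ I₁ = ⊤ := by
  have key := h.2 (0, 1) (0, 1) (1, 0) (by simp [Prod.isUnit_iff]) (by simp [Prod.isUnit_iff])
    (by simp [Prod.isUnit_iff]) (by simp [mem_prod])
  simpa [hδx, mem_prod, (ne_top_iff_one I₂).1 hI₂, eq_top_iff_one] using key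

theorem IsOneAbsDeltaPrimary.delta_right_eq_top_of_prod
    (hδx : ∀ I₁ I₂, δx (I₁.prod I₂) = (δ₁ I₁).prod (δ₂ I₂)) {I₁ : Ideal R₁} {I₂ : Ideal R₂}
    (hI₁ : I₁ ≠ ⊤) (h : IsOneAbsDeltaPrimary δx (I₁.prod I₂)) : δ₂ I₂ = ⊤ := by
  have key := h.2 (1, 0) (1, 0) (0, 1) (by simp [Prod.isUnit_iff]) (by simp [Prod.isUnit_iff])
    (by simp [Prod.isUnit_iff]) (by simp [mem_prod])
  simpa [hδx, mem_prod, (ne_top_iff_one I₁).1 hI₁, eq_top_iff_one] using key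

theorem IsOneAbsDeltaPrimary.prod_cases (hδ₁ : ∀ J, J ≤ δ₁ J) (hδ₂ : ∀ J, J ≤ δ₂ J)
    (hδx : ∀ I₁ I₂, δx (I₁.prod I₂) = (δ₁ I₁).prod (δ₂ I₂)) {I : Ideal (R₁ × R₂)}
    (h : IsOneAbsDeltaPrimary δx I) :
    (∃ I₁ : Ideal R₁, I = I₁.prod ⊤ ∧ IsDeltaPrimary δ₁ I₁) ∨
      (∃ I₂ : Ideal R₂, I = Ideal.prod ⊤ I₂ ∧ IsDeltaPrimary δ₂ I₂) ∨
      (∃ (I₁ : Ideal R₁) (I₂ : Ideal R₂), I = I₁.prod I₂ ∧ I₁ ≠ ⊤ ∧ I₂ ≠ ⊤ ∧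
        δ₁ I₁ = ⊤ ∧ δ₂ I₂ = ⊤) := by
  obtain ⟨I₁, I₂, rfl⟩ : ∃ I₁ I₂, I = Ideal.prod I₁ I₂ := ⟨_, _, ideal_prod_eq I⟩
  rcases eq_or_ne I₁ ⊤ with rfl | hI₁ <;> rcases eq_or_ne I₂ ⊤ with rfl | hI₂
  · exact absurd prod_top_top h.1
  · exact .inr (.inl ⟨I₂, rfl, h.isDeltaPrimary_of_top_prod hδ₂ hδx⟩)
  · exact .inl ⟨I₁, rfl, h.isDeltaPrimary_of_prod_top hδ₁ hδx⟩
  · exact .inr (.inr ⟨I₁, I₂, rfl, hI₁, hI₂, h.delta_left_eq_top_of_prod hδx hI₂,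
      h.delta_right_eq_top_of_prod hδx hI₁⟩)

end Prod

theorem prod_one_abs_delta_primary_characterization_general
    {R₁ R₂ : Type*} [CommRing R₁] [CommRing R₂] [Nontrivial R₁] [Nontrivial R₂]
    (δ₁ : Ideal R₁ → Ideal R₁) (hδ₁ : ExpansionFunction R₁ δ₁)
    (δ₂ : Ideal R₂ → Ideal R₂) (hδ₂ : ExpansionFunction R₂ δ₂)
    (δx : Ideal (R₁ × R₂) → Ideal (R₁ × R₂))
    (hδx : ∀ (I₁ : Ideal R₁) (I₂ : Ideal R₂), δx (I₁.prod I₂) = (δ₁ I₁).prod (δ₂ I₂))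
    (I : Ideal (R₁ × R₂)) :
    (IsOneAbsDeltaPrimary δx I ↔ IsDeltaPrimary δx I) ∧
    (IsDeltaPrimary δx I ↔
      ((∃ I₁ : Ideal R₁, I = I₁.prod ⊤ ∧ IsDeltaPrimary δ₁ I₁) ∨
       (∃ I₂ : Ideal R₂, I = Ideal.prod ⊤ I₂ ∧ IsDeltaPrimary δ₂ I₂) ∨
       (∃ (I₁ : Ideal R₁) (I₂ : Ideal R₂), I = I₁.prod I₂ ∧ I₁ ≠ ⊤ ∧ I₂ ≠ ⊤ ∧
         δ₁ I₁ = ⊤ ∧ δ₂ I₂ = ⊤))) := by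
  have h13 : IsOneAbsDeltaPrimary δx I → _ :=
    IsOneAbsDeltaPrimary.prod_cases hδ₁.1 hδ₂.1 hδx
  have h23 : IsDeltaPrimary δx I ↔ _ := ⟨fun h => h13 h.isOneAbsDeltaPrimary, ?_⟩
  · exact ⟨⟨fun h => h23.2 (h13 h), IsDeltaPrimary.isOneAbsDeltaPrimary⟩, h23⟩
  rintro (⟨I₁, rfl, h⟩ | ⟨I₂, rfl, h⟩ | ⟨I₁, I₂, rfl, hI₁, -, h₁, h₂⟩)
  exacts [isDeltaPrimary_prod_top hδ₂.1 hδx h, isDeltaPrimary_top_prod hδ₁.1 hδx h,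
    isDeltaPrimary_prod_of_delta_eq_top hδx hI₁ h₁ h₂]

theorem prod_one_abs_delta_primary_characterization
    {R₁ R₂ : Type*} [CommRing R₁] [CommRing R₂] [Nontrivial R₁] [Nontrivial R₂]
    (δ₁ : Ideal R₁ → Ideal R₁) (hδ₁ : ExpansionFunction R₁ δ₁)
    (δ₂ : Ideal R₂ → Ideal R₂) (hδ₂ : ExpansionFunction R₂ δ₂)
    (δx : Ideal (R₁ × R₂) → Ideal (R₁ × R₂))
    (hδx : ∀ (I₁ : Ideal R₁) (I₂ : Ideal R₂), δx (I₁.prod I₂) = (δ₁ I₁).prod (δ₂ I₂))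
    (I : Ideal (R₁ × R₂)) (hIproper : I ≠ ⊤) :
    (IsOneAbsDeltaPrimary δx I ↔ IsDeltaPrimary δx I) ∧
    (IsDeltaPrimary δx I ↔
      ((∃ I₁ : Ideal R₁, I = I₁.prod ⊤ ∧ IsDeltaPrimary δ₁ I₁) ∨
       (∃ I₂ : Ideal R₂, I = Ideal.prod ⊤ I₂ ∧ IsDeltaPrimary δ₂ I₂) ∨
       (∃ (I₁ : Ideal R₁) (I₂ : Ideal R₂), I = I₁.prod I₂ ∧ I₁ ≠ ⊤ ∧ I₂ ≠ ⊤ ∧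
         δ₁ I₁ = ⊤ ∧ δ₂ I₂ = ⊤))) :=
  prod_one_abs_delta_primary_characterization_general δ₁ hδ₁ δ₂ hδ₂ δx hδx I
end
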